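/- Strong growth condition (self-bounding noise): for every θ ∈ ℝ^K, Σ_{a₀=1}^K π_θ(a₀) · ∫ ‖g(θ, a₀, x)‖₂² dP_{a₀}(x) ≤ (8·R_max³·K^{3/2} / Δ²) · ‖∇(θ)‖₂, i.e., the one-step expected squared norm of the stochastic gradient is bounded by a constant multiple of the true gradient norm. -/

import Mathlib

open MeasureTheory Finset Real

/-- Softmax policy. -/
noncomputable def softmax {K : ℕ} (θ : Fin K → ℝ) (a : Fin K) : ℝ :=
  Real.exp (θ a) / ∑ a' : Fin K, Real.exp (θ a')

/-- Expected reward `π_θ^⊤ r`. -/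
noncomputable def value {K : ℕ} (r θ : Fin K → ℝ) : ℝ :=
  ∑ a : Fin K, softmax θ a * r a

/-- True gradient of `θ ↦ π_θ^⊤ r`. -/
noncomputable def pgrad {K : ℕ} (r θ : Fin K → ℝ) (a : Fin K) : ℝ :=
  softmax θ a * (r a - value r θ)

/-- Stochastic gradient. -/
noncomputable def sgrad {K : ℕ} (θ : Fin K → ℝ) (a₀ : Fin K) (x : ℝ) (a : Fin K) : ℝ :=
  ((if a = a₀ then (1 : ℝ) else 0) - softmax θ a) * x

/-- Euclidean norm on `ℝ^K`. -/
noncomputable def norm2 {K : ℕ} (v : Fin K → ℝ) : ℝ :=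
  Real.sqrt (∑ a : Fin K, (v a) ^ 2)

/-! The stochastic gradient of arm `a₀` is `x • (e_{a₀} - π)`, whose squared norm is at most
`2 (1 - π a₀) R²`, so the left side is at most `2 R² ∑ π (1 - π)`. As the rewards are
`Δ`-separated, every arm but one, say `b`, has reward at least `Δ / 2` away from the mean reward
`π^⊤ r`; hence `∑ π (1 - π) ≤ 2 (1 - π b) ≤ (4 / Δ) ∑ |∇| ≤ (4 √K / Δ) ‖∇‖₂`. -/

section ProbabilityVector

variable {ι : Type*} [Fintype ι] {p : ι → ℝ}

lemma sum_erase_eq_one_sub [DecidableEq ι] (hp1 : ∑ i, p i = 1) (j : ι) :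
    ∑ i ∈ univ.erase j, p i = 1 - p j := by
  rw [sum_erase_eq_sub (mem_univ j), hp1]

lemma le_one_of_sum_eq_one (hp0 : ∀ i, 0 ≤ p i) (hp1 : ∑ i, p i = 1) (j : ι) : p j ≤ 1 :=
  hp1 ▸ single_le_sum (fun i _ => hp0 i) (mem_univ j)

lemma sum_sq_ite_sub_le [DecidableEq ι] (hp0 : ∀ i, 0 ≤ p i) (hp1 : ∑ i, p i = 1) (j : ι) :
    ∑ i, ((if i = j then (1 : ℝ) else 0) - p i) ^ 2 ≤ 2 * (1 - p j) := by
  have hle := le_one_of_sum_eq_one hp0 hp1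
  rw [← add_sum_erase _ _ (mem_univ j), if_pos rfl]
  have hrest : ∑ i ∈ univ.erase j, ((if i = j then (1 : ℝ) else 0) - p i) ^ 2
      ≤ ∑ i ∈ univ.erase j, p i := by
    refine sum_le_sum fun i hi => ?_
    rw [if_neg (ne_of_mem_erase hi)]
    nlinarith [hp0 i, hle i]
  nlinarith [sum_erase_eq_one_sub hp1 j, hp0 j, hle j]

lemma sum_mul_one_sub_le (hp0 : ∀ i, 0 ≤ p i) (hp1 : ∑ i, p i = 1) (j : ι) :
    ∑ i, p i * (1 - p i) ≤ 2 * (1 - p j) := by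
  classical
  have hle := le_one_of_sum_eq_one hp0 hp1
  rw [← add_sum_erase _ _ (mem_univ j)]
  have hrest : ∑ i ∈ univ.erase j, p i * (1 - p i) ≤ ∑ i ∈ univ.erase j, p i :=
    sum_le_sum fun i _ => by nlinarith [hp0 i, hle i]
  nlinarith [sum_erase_eq_one_sub hp1 j, hp0 j, hle j]

lemma mul_one_sub_le_sum_mul (hp0 : ∀ i, 0 ≤ p i) (hp1 : ∑ i, p i = 1) {f : ι → ℝ}
    (hf : ∀ i, 0 ≤ f i) {d : ℝ} (j : ι) (hd : ∀ i, i ≠ j → d ≤ f i) :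
    d * (1 - p j) ≤ ∑ i, p i * f i := by
  classical
  calc d * (1 - p j) = ∑ i ∈ univ.erase j, p i * d := by
        rw [← sum_mul, sum_erase_eq_one_sub hp1, mul_comm]
    _ ≤ ∑ i ∈ univ.erase j, p i * f i :=
        sum_le_sum fun i hi => mul_le_mul_of_nonneg_left (hd i (ne_of_mem_erase hi)) (hp0 i)
    _ ≤ ∑ i, p i * f i :=
        sum_le_sum_of_subset_of_nonneg (erase_subset _ _) fun i _ _ =>
          mul_nonneg (hp0 i) (hf i)

end ProbabilityVector

lemma exists_forall_ne_half_le_abs_sub {ι : Type*} [Nonempty ι] {r : ι → ℝ} {Δ : ℝ}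
    (hΔ : ∀ i j, i ≠ j → Δ ≤ |r i - r j|) (v : ℝ) : ∃ j, ∀ i, i ≠ j → Δ / 2 ≤ |r i - v| := by
  by_cases h : ∃ j, |r j - v| < Δ / 2
  · obtain ⟨j, hj⟩ := h
    refine ⟨j, fun i hij => ?_⟩
    have := abs_sub_le (r i) v (r j)
    rw [abs_sub_comm v] at this
    linarith [hΔ i j hij]
  · push Not at h
    exact ⟨Classical.arbitrary ι, fun i _ => h i⟩

lemma sum_abs_le_sqrt_card_mul_norm2 {K : ℕ} (v : Fin K → ℝ) :
    ∑ a, |v a| ≤ √K * norm2 v := by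
  rw [norm2, ← sqrt_mul (Nat.cast_nonneg K)]
  refine le_sqrt_of_sq_le ?_
  simpa [sq_abs] using sq_sum_le_card_mul_sum_sq (s := univ) (f := fun a => |v a|)

lemma integral_sq_le_of_ae_mem_Icc {μ : Measure ℝ} [IsProbabilityMeasure μ] {R : ℝ}
    (hμ : ∀ᵐ x ∂μ, x ∈ Set.Icc (-R) R) : ∫ x, x ^ 2 ∂μ ≤ R ^ 2 := by
  have hsq : ∀ᵐ x ∂μ, x ^ 2 ≤ R ^ 2 := by
    filter_upwards [hμ] with x hx
    exact sq_le_sq' hx.1 hx.2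
  simpa using integral_mono_of_nonneg (ae_of_all _ fun x => sq_nonneg x) (integrable_const _) hsq

section Softmax

variable {K : ℕ}

lemma softmax_nonneg (θ : Fin K → ℝ) (a : Fin K) : 0 ≤ softmax θ a :=
  div_nonneg (exp_pos _).le (sum_nonneg fun _ _ => (exp_pos _).le)

lemma sum_softmax [NeZero K] (θ : Fin K → ℝ) : ∑ a, softmax θ a = 1 := by
  simp only [softmax]
  rw [← sum_div, div_self (sum_pos (fun _ _ => exp_pos _) univ_nonempty).ne']

lemma norm2_sgrad_sq (θ : Fin K → ℝ) (a₀ : Fin K) (x : ℝ) :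
    norm2 (sgrad θ a₀ x) ^ 2
      = (∑ a, ((if a = a₀ then (1 : ℝ) else 0) - softmax θ a) ^ 2) * x ^ 2 := by
  rw [norm2, sq_sqrt (sum_nonneg fun _ _ => sq_nonneg _), sum_mul]
  simp only [sgrad, mul_pow]

lemma sum_abs_pgrad (r θ : Fin K → ℝ) :
    ∑ a, |pgrad r θ a| = ∑ a, softmax θ a * |r a - value r θ| := by
  simp only [pgrad, abs_mul, abs_of_nonneg (softmax_nonneg θ _)]

lemma softmax_mul_integral_norm2_sgrad_sq_le [NeZero K] (θ : Fin K → ℝ) (a₀ : Fin K)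
    {μ : Measure ℝ} [IsProbabilityMeasure μ] {R : ℝ} (hμ : ∀ᵐ x ∂μ, x ∈ Set.Icc (-R) R) :
    softmax θ a₀ * ∫ x, norm2 (sgrad θ a₀ x) ^ 2 ∂μ
      ≤ 2 * R ^ 2 * (softmax θ a₀ * (1 - softmax θ a₀)) := by
  simp_rw [norm2_sgrad_sq, integral_const_mul]
  have hπ0 := softmax_nonneg θ a₀
  have hπ1 := le_one_of_sum_eq_one (softmax_nonneg θ) (sum_softmax θ) a₀
  have hc := sum_sq_ite_sub_le (softmax_nonneg θ) (sum_softmax θ) a₀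
  have hI := integral_sq_le_of_ae_mem_Icc hμ
  have hI0 : 0 ≤ ∫ x, x ^ 2 ∂μ := integral_nonneg fun x => sq_nonneg x
  calc softmax θ a₀ * ((∑ a, ((if a = a₀ then (1 : ℝ) else 0) - softmax θ a) ^ 2)
        * ∫ x, x ^ 2 ∂μ)
      ≤ softmax θ a₀ * (2 * (1 - softmax θ a₀) * R ^ 2) :=
        mul_le_mul_of_nonneg_left (mul_le_mul hc hI hI0 (by linarith)) hπ0
    _ = 2 * R ^ 2 * (softmax θ a₀ * (1 - softmax θ a₀)) := by ring

lemma sum_softmax_mul_one_sub_le_norm2_pgrad [NeZero K] {r : Fin K → ℝ} {Δ : ℝ} (hΔ : 0 < Δ)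
    (hsep : ∀ i j, i ≠ j → Δ ≤ |r i - r j|) (θ : Fin K → ℝ) :
    ∑ a, softmax θ a * (1 - softmax θ a) ≤ 4 * √K / Δ * norm2 (pgrad r θ) := by
  obtain ⟨b, hb⟩ := exists_forall_ne_half_le_abs_sub hsep (value r θ)
  have hmass := mul_one_sub_le_sum_mul (softmax_nonneg θ) (sum_softmax θ)
    (fun a => abs_nonneg (r a - value r θ)) b hb
  rw [← sum_abs_pgrad] at hmass
  have hcs := sum_abs_le_sqrt_card_mul_norm2 (pgrad r θ)
  calc ∑ a, softmax θ a * (1 - softmax θ a)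
      ≤ 2 * (1 - softmax θ b) := sum_mul_one_sub_le (softmax_nonneg θ) (sum_softmax θ) b
    _ = 4 / Δ * (Δ / 2 * (1 - softmax θ b)) := by field_simp; ring
    _ ≤ 4 / Δ * (√K * norm2 (pgrad r θ)) :=
        mul_le_mul_of_nonneg_left (hmass.trans hcs) (by positivity)
    _ = 4 * √K / Δ * norm2 (pgrad r θ) := by ring

end Softmax

theorem strong_growth_condition_general
    (K : ℕ) (hK : 2 ≤ K) (Rmax : ℝ)
    (r : Fin K → ℝ) (hr : ∀ a, r a ∈ Set.Icc (-Rmax) Rmax)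
    (Δ : ℝ) (hΔpos : 0 < Δ)
    (hΔle : ∀ i j : Fin K, i ≠ j → Δ ≤ |r i - r j|)
    (P : Fin K → Measure ℝ) (hprob : ∀ a, IsProbabilityMeasure (P a))
    (hsupp : ∀ a, ∀ᵐ x ∂(P a), x ∈ Set.Icc (-Rmax) Rmax)
    (θ : Fin K → ℝ) :
    ∑ a₀ : Fin K, softmax θ a₀ * ∫ x, (norm2 (sgrad θ a₀ x)) ^ 2 ∂(P a₀)
      ≤ (8 * Rmax ^ 3 * (K : ℝ) ^ ((3 : ℝ) / 2) / Δ ^ 2) * norm2 (pgrad r θ) := by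
  have : NeZero K := ⟨by omega⟩
  have hK0 : (0 : ℝ) ≤ K := Nat.cast_nonneg K
  have hΔR : Δ ≤ Rmax * K := by
    have hΔ2R : Δ ≤ 2 * Rmax := by
      have h01 := hΔle ⟨0, by omega⟩ ⟨1, by omega⟩ (by simp)
      have hdist := Real.dist_le_of_mem_Icc (hr ⟨0, by omega⟩) (hr ⟨1, by omega⟩)
      rw [Real.dist_eq] at hdist
      linarith
    have hK2 : (2 : ℝ) ≤ K := by exact_mod_cast hK
    nlinarith
  have hK32 : (K : ℝ) ^ ((3 : ℝ) / 2) = K * √K := by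
    rw [show (3 : ℝ) / 2 = 1 + 1 / 2 by norm_num, rpow_add' hK0 (by norm_num), rpow_one,
      sqrt_eq_rpow]
  have hN := sum_softmax_mul_one_sub_le_norm2_pgrad hΔpos hΔle θ
  calc ∑ a₀, softmax θ a₀ * ∫ x, norm2 (sgrad θ a₀ x) ^ 2 ∂(P a₀)
      ≤ ∑ a₀, 2 * Rmax ^ 2 * (softmax θ a₀ * (1 - softmax θ a₀)) :=
        sum_le_sum fun a₀ _ => softmax_mul_integral_norm2_sgrad_sq_le θ a₀ (hsupp a₀)
    _ = 2 * Rmax ^ 2 * ∑ a₀, softmax θ a₀ * (1 - softmax θ a₀) := (mul_sum ..).symm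
    _ ≤ 2 * Rmax ^ 2 * (4 * √K / Δ * norm2 (pgrad r θ)) := by gcongr
    _ ≤ 2 * Rmax ^ 2 * (4 * √K / Δ * norm2 (pgrad r θ)) * (Rmax * K / Δ) := by
        refine le_mul_of_one_le_right (by unfold norm2; positivity) ?_
        rwa [one_le_div hΔpos]
    _ = (8 * Rmax ^ 3 * (K : ℝ) ^ ((3 : ℝ) / 2) / Δ ^ 2) * norm2 (pgrad r θ) := by
        rw [hK32]; ring

/-- Strong growth condition (self-bounding noise): the one-step expected squared norm of the
stochastic gradient is bounded by a constant multiple of the true gradient norm. -/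
theorem strong_growth_condition
    (K : ℕ) (hK : 2 ≤ K) (Rmax : ℝ) (hRmax : 0 < Rmax)
    (r : Fin K → ℝ) (hr : ∀ a, r a ∈ Set.Icc (-Rmax) Rmax)
    (hties : ∀ i j : Fin K, i ≠ j → r i ≠ r j)
    (Δ : ℝ) (hΔpos : 0 < Δ)
    (hΔle : ∀ i j : Fin K, i ≠ j → Δ ≤ |r i - r j|)
    (hΔmem : ∃ i j : Fin K, i ≠ j ∧ Δ = |r i - r j|)
    (P : Fin K → Measure ℝ) (hprob : ∀ a, IsProbabilityMeasure (P a))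
    (hsupp : ∀ a, ∀ᵐ x ∂(P a), x ∈ Set.Icc (-Rmax) Rmax)
    (hmean : ∀ a, ∫ x, x ∂(P a) = r a)
    (θ : Fin K → ℝ) :
    ∑ a₀ : Fin K, softmax θ a₀ * ∫ x, (norm2 (sgrad θ a₀ x)) ^ 2 ∂(P a₀)
      ≤ (8 * Rmax ^ 3 * (K : ℝ) ^ ((3 : ℝ) / 2) / Δ ^ 2) * norm2 (pgrad r θ) :=
  strong_growth_condition_general K hK Rmax r hr Δ hΔpos hΔle P hprob hsupp θ
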